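/- arXiv:2604.25320 — 3 statements merged into one kernel-verified Lean document; each statement's English description precedes it below -/
import Mathlib

section
/- Let (f_n)_{n≥1} be a sequence of nonconstant holomorphic self-maps of the unit disk 𝔻, and suppose the forward iterates F_n := f_n ∘ ⋯ ∘ f_1 converge locally uniformly on 𝔻 to a holomorphic self-map F of 𝔻. Then F is nonconstant if and only if for every a ∈ 𝔻 the series Σ_{n≥1} (1 − D_h f_n(a)) converges, and this in turn holds if and only if the series converges for some a ∈ 𝔻. -/
open Filter Metric Set

noncomputable section

/-- The open unit disk in the complex plane. -/
def unitDisk : Set ℂ := Metric.ball (0 : ℂ) 1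

/-- A holomorphic self-map of the unit disk. -/
def IsHolSelfMap (f : ℂ → ℂ) : Prop :=
  DifferentiableOn ℂ f unitDisk ∧ Set.MapsTo f unitDisk unitDisk

/-- The hyperbolic distortion `D_h f (z) = (1 - |z|²)|f′(z)| / (1 - |f(z)|²)`. -/
def hypDist (f : ℂ → ℂ) (z : ℂ) : ℝ :=
  (1 - ‖z‖ ^ 2) * ‖deriv f z‖ / (1 - ‖f z‖ ^ 2)

/-!
Write `ρ` for the pseudo-hyperbolic distance. The Schwarz–Pick lemma, applied to the hyperbolic
difference quotients `f*(w, ·)` and `f*(z, ·)` (of modulus `D_h f` at their base points and of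
equal modulus at the other point), gives
`(1 - ρ(z, w))² (1 - D_h f(w)) ≤ (1 + ρ(z, w))² (1 - D_h f(z))`.
Hence the convergence of `∑ (1 - D_h f_n(z_n))` does not depend on the base points `z_n` as long as
they stay at pseudo-hyperbolic distance bounded away from `1`: this holds for two constant
sequences, and for the orbit `F_{n-1}(b)` against `b`, because `F_n(b) → F(b) ∈ 𝔻`.
Along the orbit, the chain rule gives `D_h F_n(b) = ∏_{k ≤ n} D_h f_k(F_{k-1}(b)) → D_h F(b)`, and a
product of factors in `(0, 1]` has a positive limit iff `∑ (1 - factor)` converges. Finally `F` is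
nonconstant iff `D_h F(b) > 0` for some `b`; in the converse direction `b` is taken off the
countable set where some `F_n'` vanishes, the `F_n` being nonconstant by the open mapping theorem.
-/

open ComplexConjugate Topology

lemma mem_unitDisk {z : ℂ} : z ∈ unitDisk ↔ ‖z‖ < 1 := mem_ball_zero_iff

lemma isOpen_unitDisk : IsOpen unitDisk := isOpen_ball

lemma isPreconnected_unitDisk : IsPreconnected unitDisk := (convex_ball 0 1).isPreconnected

lemma zero_mem_unitDisk : (0 : ℂ) ∈ unitDisk := mem_ball_self one_pos

lemma one_sub_sq_norm_pos {z : ℂ} (hz : z ∈ unitDisk) : 0 < 1 - ‖z‖ ^ 2 := by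
  have := mem_unitDisk.1 hz
  nlinarith [norm_nonneg z]

/-- The pseudo-hyperbolic distance. On the closed disk the denominator vanishes only when
`z = w` lies on the unit circle, where the junk value `0` is harmless. -/
def pseudoDist (z w : ℂ) : ℝ := ‖z - w‖ / ‖1 - conj w * z‖

lemma sq_norm_one_sub_conj_mul (z w : ℂ) :
    ‖1 - conj w * z‖ ^ 2 = ‖z - w‖ ^ 2 + (1 - ‖z‖ ^ 2) * (1 - ‖w‖ ^ 2) := by
  simp only [Complex.sq_norm, Complex.normSq_apply, Complex.sub_re, Complex.sub_im,
    Complex.mul_re, Complex.mul_im, Complex.one_re, Complex.one_im, Complex.conj_re,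
    Complex.conj_im]
  ring

lemma norm_sub_lt_norm_one_sub_conj_mul {z w : ℂ} (hz : z ∈ unitDisk) (hw : w ∈ unitDisk) :
    ‖z - w‖ < ‖1 - conj w * z‖ := by
  refine lt_of_pow_lt_pow_left₀ 2 (norm_nonneg _) ?_
  rw [sq_norm_one_sub_conj_mul]
  nlinarith [one_sub_sq_norm_pos hz, one_sub_sq_norm_pos hw]

lemma one_sub_conj_mul_ne_zero {z w : ℂ} (hz : z ∈ unitDisk) (hw : w ∈ unitDisk) :
    1 - conj w * z ≠ 0 :=
  norm_pos_iff.1 ((norm_nonneg _).trans_lt (norm_sub_lt_norm_one_sub_conj_mul hz hw))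

lemma pseudoDist_nonneg (z w : ℂ) : 0 ≤ pseudoDist z w := by
  unfold pseudoDist; positivity

lemma pseudoDist_self (z : ℂ) : pseudoDist z z = 0 := by simp [pseudoDist]

lemma pseudoDist_comm (z w : ℂ) : pseudoDist z w = pseudoDist w z := by
  rw [pseudoDist, pseudoDist, norm_sub_rev, ← Complex.norm_conj (1 - conj z * w)]
  simp [mul_comm]

lemma pseudoDist_lt_one {z w : ℂ} (hz : z ∈ unitDisk) (hw : w ∈ unitDisk) :
    pseudoDist z w < 1 :=
  (div_lt_one (norm_pos_iff.2 (one_sub_conj_mul_ne_zero hz hw))).2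
    (norm_sub_lt_norm_one_sub_conj_mul hz hw)

lemma continuousAt_pseudoDist_left {z w : ℂ} (h : 1 - conj w * z ≠ 0) :
    ContinuousAt (fun ζ => pseudoDist ζ w) z :=
  ContinuousAt.div (by fun_prop) (by fun_prop) (norm_ne_zero_iff.2 h)

def mobius (a z : ℂ) : ℂ := (a - z) / (1 - conj a * z)

lemma norm_mobius (a z : ℂ) : ‖mobius a z‖ = pseudoDist z a := by
  rw [mobius, norm_div, norm_sub_rev, pseudoDist]

lemma mobius_self (a : ℂ) : mobius a a = 0 := by simp [mobius]

lemma mobius_zero (a : ℂ) : mobius a 0 = a := by simp [mobius]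

lemma mobius_mapsTo {a : ℂ} (ha : a ∈ unitDisk) : MapsTo (mobius a) unitDisk unitDisk :=
  fun _ hz => mem_unitDisk.2 (norm_mobius a _ ▸ pseudoDist_lt_one hz ha)

lemma mobius_mobius {a z : ℂ} (ha : a ∈ unitDisk) (hz : z ∈ unitDisk) :
    mobius a (mobius a z) = z := by
  have hz' := one_sub_conj_mul_ne_zero hz ha
  have ha' := one_sub_conj_mul_ne_zero ha ha
  rw [mobius, mobius]
  have hden : 1 - conj a * ((a - z) / (1 - conj a * z)) = (1 - conj a * a) / (1 - conj a * z) := by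
    field_simp
    ring
  rw [hden, sub_div' hz', div_div_div_cancel_right₀ hz']
  rw [show a * (1 - conj a * z) - (a - z) = z * (1 - conj a * a) by ring]
  exact mul_div_cancel_right₀ z ha'

lemma differentiableOn_mobius {a : ℂ} (ha : a ∈ unitDisk) :
    DifferentiableOn ℂ (mobius a) unitDisk :=
  fun _ hz => DifferentiableWithinAt.div (by fun_prop) (by fun_prop)
    (one_sub_conj_mul_ne_zero hz ha)

theorem pseudoDist_le_of_mapsTo {h : ℂ → ℂ} (hd : DifferentiableOn ℂ h unitDisk)
    (hm : MapsTo h unitDisk unitDisk) {z w : ℂ} (hz : z ∈ unitDisk) (hw : w ∈ unitDisk) :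
    pseudoDist (h z) (h w) ≤ pseudoDist z w := by
  set k := mobius (h w) ∘ h ∘ mobius w
  have hkd : DifferentiableOn ℂ k unitDisk :=
    (differentiableOn_mobius (hm hw)).comp (hd.comp (differentiableOn_mobius hw)
      (mobius_mapsTo hw)) (hm.comp (mobius_mapsTo hw))
  have hkm : MapsTo k unitDisk unitDisk := (mobius_mapsTo (hm hw)).comp (hm.comp (mobius_mapsTo hw))
  have hk0 : k 0 = 0 := by simp [k, mobius_zero, mobius_self]
  have hschwarz := Complex.norm_le_norm_of_mapsTo_ball hkd
    (hkm.mono_right ball_subset_closedBall) hk0 (mem_unitDisk.1 (mobius_mapsTo hw hz))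
  simpa only [k, Function.comp_apply, mobius_mobius hw hz, norm_mobius] using hschwarz

theorem pseudoDist_le_of_norm_le_one {h : ℂ → ℂ} (hd : DifferentiableOn ℂ h unitDisk)
    (hb : ∀ ζ ∈ unitDisk, ‖h ζ‖ ≤ 1) {z w : ℂ} (hz : z ∈ unitDisk) (hw : w ∈ unitDisk) :
    pseudoDist (h z) (h w) ≤ pseudoDist z w := by
  by_cases hmax : ∃ ζ₀ ∈ unitDisk, 1 ≤ ‖h ζ₀‖
  · obtain ⟨ζ₀, hζ₀, h1⟩ := hmax
    have hconst := Complex.eqOn_of_isPreconnected_of_isMaxOn_norm isPreconnected_unitDisk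
      isOpen_unitDisk hd hζ₀ fun ζ hζ => (hb ζ hζ).trans h1
    rw [show h z = h w from (hconst hz).trans (hconst hw).symm, pseudoDist_self]
    exact pseudoDist_nonneg z w
  · push Not at hmax
    exact pseudoDist_le_of_mapsTo hd (fun ζ hζ => mem_unitDisk.2 (hmax ζ hζ)) hz hw

lemma norm_sub_norm_mul_le {u v : ℂ} (hu : ‖u‖ ≤ 1) (hv : ‖v‖ ≤ 1) :
    (‖u‖ - ‖v‖) * ‖1 - conj v * u‖ ≤ ‖u - v‖ * (1 - ‖u‖ * ‖v‖) := by
  have hY : 1 - ‖u‖ * ‖v‖ ≤ ‖1 - conj v * u‖ := by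
    have := norm_sub_norm_le (1 : ℂ) (conj v * u)
    rw [norm_one, norm_mul, Complex.norm_conj] at this
    linarith [mul_comm ‖u‖ ‖v‖]
  have huv : ‖u‖ * ‖v‖ ≤ 1 := mul_le_one₀ hu (norm_nonneg v) hv
  rcases le_or_gt ‖u‖ ‖v‖ with hle | hlt
  · nlinarith [norm_nonneg (1 - conj v * u), norm_nonneg (u - v)]
  refine le_of_pow_le_pow_left₀ two_ne_zero (by positivity) ?_
  have hid := sq_norm_one_sub_conj_mul u v
  have hnn : 0 ≤ (1 - ‖u‖ ^ 2) * (1 - ‖v‖ ^ 2) := by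
    apply mul_nonneg <;> nlinarith [norm_nonneg u, norm_nonneg v]
  have hYsq : (1 - ‖u‖ * ‖v‖) ^ 2 ≤ ‖1 - conj v * u‖ ^ 2 :=
    pow_le_pow_left₀ (by linarith) hY 2
  calc ((‖u‖ - ‖v‖) * ‖1 - conj v * u‖) ^ 2
      = ((1 - ‖u‖ * ‖v‖) ^ 2 - (1 - ‖u‖ ^ 2) * (1 - ‖v‖ ^ 2)) * ‖1 - conj v * u‖ ^ 2 := by ring
    _ ≤ (‖1 - conj v * u‖ ^ 2 - (1 - ‖u‖ ^ 2) * (1 - ‖v‖ ^ 2)) * (1 - ‖u‖ * ‖v‖) ^ 2 := by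
      nlinarith [mul_le_mul_of_nonneg_left hYsq hnn]
    _ = (‖u - v‖ * (1 - ‖u‖ * ‖v‖)) ^ 2 := by rw [hid]; ring

lemma one_sub_norm_le_of_pseudoDist_le {u v : ℂ} {ρ : ℝ} (hu : ‖u‖ ≤ 1) (hv : ‖v‖ ≤ 1)
    (hρ : pseudoDist u v ≤ ρ) : (1 - ρ) * (1 - ‖v‖) ≤ (1 + ρ) * (1 - ‖u‖) := by
  have hρ0 : 0 ≤ ρ := (pseudoDist_nonneg u v).trans hρ
  suffices ‖u‖ - ‖v‖ ≤ ρ * (1 - ‖u‖ * ‖v‖) by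
    nlinarith [mul_nonneg hρ0 (mul_nonneg (sub_nonneg.2 hu) (sub_nonneg.2 hv))]
  rcases eq_or_ne (1 - conj v * u) 0 with hY | hY
  · have huv : ‖v‖ * ‖u‖ = 1 := by
      rw [← Complex.norm_conj v, ← norm_mul, ← sub_eq_zero.1 hY, norm_one]
    nlinarith [norm_nonneg u, norm_nonneg v]
  · have hYpos : 0 < ‖1 - conj v * u‖ := norm_pos_iff.2 hY
    have hc : ‖u - v‖ ≤ ρ * ‖1 - conj v * u‖ := (div_le_iff₀ hYpos).1 hρ
    have hkey := norm_sub_norm_mul_le hu hv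
    have h1 : 0 ≤ 1 - ‖u‖ * ‖v‖ := by nlinarith [norm_nonneg u, norm_nonneg v]
    refine le_of_mul_le_mul_right ?_ hYpos
    nlinarith [mul_le_mul_of_nonneg_right hc h1]

def hypDiffQuot (f : ℂ → ℂ) (w ζ : ℂ) : ℂ :=
  dslope f w ζ * (1 - conj w * ζ) / (1 - conj (f w) * f ζ)

section hypDiffQuot

variable {f : ℂ → ℂ} {z w : ℂ}

lemma differentiableOn_hypDiffQuot (hf : IsHolSelfMap f) (hw : w ∈ unitDisk) :
    DifferentiableOn ℂ (hypDiffQuot f w) unitDisk := by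
  have hslope : DifferentiableOn ℂ (dslope f w) unitDisk :=
    (Complex.differentiableOn_dslope (isOpen_unitDisk.mem_nhds hw)).2 hf.1
  refine (hslope.mul (by fun_prop)).div ((differentiableOn_const _).sub
    ((differentiableOn_const _).mul hf.1)) fun ζ hζ => ?_
  exact one_sub_conj_mul_ne_zero (hf.2 hζ) (hf.2 hw)

lemma norm_hypDiffQuot_of_ne (hne : z ≠ w) :
    ‖hypDiffQuot f w z‖ = pseudoDist (f z) (f w) / pseudoDist z w := by
  rw [hypDiffQuot, dslope_of_ne _ hne, slope_def_field, pseudoDist, pseudoDist]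
  simp only [norm_div, norm_mul]
  rw [div_div_div_eq]
  ring

lemma norm_hypDiffQuot_comm (f : ℂ → ℂ) (z w : ℂ) :
    ‖hypDiffQuot f w z‖ = ‖hypDiffQuot f z w‖ := by
  rcases eq_or_ne z w with rfl | hne
  · rfl
  · rw [norm_hypDiffQuot_of_ne hne, norm_hypDiffQuot_of_ne hne.symm, pseudoDist_comm (f z),
      pseudoDist_comm z]

lemma norm_one_sub_conj_mul_self (hz : z ∈ unitDisk) : ‖1 - conj z * z‖ = 1 - ‖z‖ ^ 2 := by
  rw [Complex.conj_mul', ← Complex.ofReal_pow, ← Complex.ofReal_one, ← Complex.ofReal_sub,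
    Complex.norm_real, Real.norm_of_nonneg (one_sub_sq_norm_pos hz).le]

lemma norm_hypDiffQuot_self (hw : w ∈ unitDisk) (hfw : f w ∈ unitDisk) :
    ‖hypDiffQuot f w w‖ = hypDist f w := by
  rw [hypDiffQuot, dslope_same, norm_div, norm_mul, norm_one_sub_conj_mul_self hw,
    norm_one_sub_conj_mul_self hfw, hypDist, mul_comm]

lemma norm_hypDiffQuot_le_one (hf : IsHolSelfMap f) (hw : w ∈ unitDisk) :
    ∀ ζ ∈ unitDisk, ‖hypDiffQuot f w ζ‖ ≤ 1 := by
  have off_diag : ∀ ζ ∈ unitDisk, ζ ≠ w → ‖hypDiffQuot f w ζ‖ ≤ 1 := fun ζ hζ hne => by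
    rw [norm_hypDiffQuot_of_ne hne]
    exact div_le_one_of_le₀ (pseudoDist_le_of_mapsTo hf.1 hf.2 hζ hw) (pseudoDist_nonneg _ _)
  intro ζ hζ
  rcases eq_or_ne ζ w with rfl | hne
  · have hcont : ContinuousAt (fun x => ‖hypDiffQuot f ζ x‖) ζ :=
      ((differentiableOn_hypDiffQuot hf hζ).differentiableAt
        (isOpen_unitDisk.mem_nhds hζ)).continuousAt.norm
    refine le_of_tendsto (hcont.tendsto.mono_left (nhdsWithin_le_nhds (s := {ζ}ᶜ))) ?_
    filter_upwards [self_mem_nhdsWithin, mem_nhdsWithin_of_mem_nhds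
      (isOpen_unitDisk.mem_nhds hζ)] with x hx hxD
    exact off_diag x hxD hx
  · exact off_diag ζ hζ hne

end hypDiffQuot

lemma hypDist_le_one {f : ℂ → ℂ} {z : ℂ} (hf : IsHolSelfMap f) (hz : z ∈ unitDisk) :
    hypDist f z ≤ 1 :=
  norm_hypDiffQuot_self hz (hf.2 hz) ▸ norm_hypDiffQuot_le_one hf hz z hz

lemma hypDist_nonneg {f : ℂ → ℂ} {z : ℂ} (hz : z ∈ unitDisk) (hfz : f z ∈ unitDisk) :
    0 ≤ hypDist f z :=
  div_nonneg (mul_nonneg (one_sub_sq_norm_pos hz).le (norm_nonneg _))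
    (one_sub_sq_norm_pos hfz).le

lemma hypDist_pos {f : ℂ → ℂ} {z : ℂ} (hz : z ∈ unitDisk) (hfz : f z ∈ unitDisk)
    (hf' : deriv f z ≠ 0) : 0 < hypDist f z :=
  div_pos (mul_pos (one_sub_sq_norm_pos hz) (norm_pos_iff.2 hf')) (one_sub_sq_norm_pos hfz)

theorem one_sub_hypDist_le {f : ℂ → ℂ} (hf : IsHolSelfMap f) {z w : ℂ} (hz : z ∈ unitDisk)
    (hw : w ∈ unitDisk) :
    (1 - pseudoDist z w) ^ 2 * (1 - hypDist f w) ≤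
      (1 + pseudoDist z w) ^ 2 * (1 - hypDist f z) := by
  set ρ := pseudoDist z w
  have hρ0 : 0 ≤ ρ := pseudoDist_nonneg z w
  have hρ1 : ρ < 1 := pseudoDist_lt_one hz hw
  have at_w : (1 - ρ) * (1 - hypDist f w) ≤ (1 + ρ) * (1 - ‖hypDiffQuot f w z‖) := by
    rw [← norm_hypDiffQuot_self hw (hf.2 hw)]
    exact one_sub_norm_le_of_pseudoDist_le (norm_hypDiffQuot_le_one hf hw z hz)
      (norm_hypDiffQuot_le_one hf hw w hw) (pseudoDist_le_of_norm_le_one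
        (differentiableOn_hypDiffQuot hf hw) (norm_hypDiffQuot_le_one hf hw) hz hw)
  have at_z : (1 - ρ) * (1 - ‖hypDiffQuot f w z‖) ≤ (1 + ρ) * (1 - hypDist f z) := by
    rw [← norm_hypDiffQuot_self hz (hf.2 hz), norm_hypDiffQuot_comm]
    exact one_sub_norm_le_of_pseudoDist_le (norm_hypDiffQuot_le_one hf hz z hz)
      (norm_hypDiffQuot_le_one hf hz w hw) (pseudoDist_le_of_norm_le_one
        (differentiableOn_hypDiffQuot hf hz) (norm_hypDiffQuot_le_one hf hz) hz hw)
  nlinarith [mul_le_mul_of_nonneg_left at_w (sub_nonneg.2 hρ1.le),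
    mul_le_mul_of_nonneg_left at_z (by linarith : (0 : ℝ) ≤ 1 + ρ)]

theorem summable_one_sub_hypDist_of_pseudoDist_le {g : ℕ → ℂ → ℂ}
    (hg : ∀ n, IsHolSelfMap (g n)) {z w : ℕ → ℂ} (hz : ∀ n, z n ∈ unitDisk)
    (hw : ∀ n, w n ∈ unitDisk) {r : ℝ} (hr : r < 1)
    (hρ : ∀ᶠ n in atTop, pseudoDist (z n) (w n) ≤ r)
    (hs : Summable fun n => 1 - hypDist (g n) (z n)) :
    Summable fun n => 1 - hypDist (g n) (w n) := by
  refine Summable.of_norm_bounded_eventually_nat (hs.mul_left (4 / (1 - r) ^ 2)) ?_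
  filter_upwards [hρ] with n hn
  have hcmp := one_sub_hypDist_le (hg n) (hz n) (hw n)
  have hρ0 := pseudoDist_nonneg (z n) (w n)
  have hDz := hypDist_le_one (hg n) (hz n)
  have hDw := hypDist_le_one (hg n) (hw n)
  rw [Real.norm_of_nonneg (sub_nonneg.2 hDw), div_mul_eq_mul_div,
    le_div_iff₀ (pow_pos (sub_pos.2 hr) 2)]
  calc (1 - hypDist (g n) (w n)) * (1 - r) ^ 2
      ≤ (1 - pseudoDist (z n) (w n)) ^ 2 * (1 - hypDist (g n) (w n)) := by
        rw [mul_comm]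
        gcongr
    _ ≤ (1 + pseudoDist (z n) (w n)) ^ 2 * (1 - hypDist (g n) (z n)) := hcmp
    _ ≤ 4 * (1 - hypDist (g n) (z n)) := by
        gcongr
        nlinarith [pseudoDist_lt_one (hz n) (hw n)]

lemma summable_one_sub_hypDist_of_summable {g : ℕ → ℂ → ℂ} (hg : ∀ n, IsHolSelfMap (g n))
    {a b : ℂ} (ha : a ∈ unitDisk) (hb : b ∈ unitDisk)
    (hs : Summable fun n => 1 - hypDist (g n) a) : Summable fun n => 1 - hypDist (g n) b :=
  summable_one_sub_hypDist_of_pseudoDist_le hg (fun _ => ha) (fun _ => hb)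
    (pseudoDist_lt_one ha hb) (Eventually.of_forall fun _ => le_rfl) hs

lemma summable_one_sub_of_tendsto_prod {D : ℕ → ℝ} (h0 : ∀ n, 0 ≤ D n) (h1 : ∀ n, D n ≤ 1)
    {L : ℝ} (hL : Tendsto (fun n => ∏ k ∈ Finset.range n, D k) atTop (𝓝 L)) (hLpos : 0 < L) :
    Summable fun n => 1 - D n := by
  have hanti : Antitone fun n => ∏ k ∈ Finset.range n, D k := antitone_nat_of_succ_le fun n => by
    rw [Finset.prod_range_succ]
    exact mul_le_of_le_one_right (Finset.prod_nonneg fun k _ => h0 k) (h1 n)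
  refine summable_of_sum_range_le (c := -Real.log L) (fun n => sub_nonneg.2 (h1 n)) fun n => ?_
  have hexp : ∏ k ∈ Finset.range n, D k ≤ Real.exp (-∑ k ∈ Finset.range n, (1 - D k)) := by
    rw [← Finset.sum_neg_distrib, Real.exp_sum]
    exact Finset.prod_le_prod (fun k _ => h0 k) fun k _ => by
      linarith [Real.add_one_le_exp (-(1 - D k))]
  have hlog := (Real.log_le_iff_le_exp hLpos).2 ((hanti.le_of_tendsto hL n).trans hexp)
  linarith

lemma pos_of_tendsto_prod_of_summable {D : ℕ → ℝ} (h0 : ∀ n, 0 < D n)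
    (hs : Summable fun n => 1 - D n) {L : ℝ}
    (hL : Tendsto (fun n => ∏ k ∈ Finset.range n, D k) atTop (𝓝 L)) : 0 < L := by
  have hlog : Summable fun n => Real.log (D n) := by
    simpa using Real.summable_log_one_add_of_summable hs.neg
  rw [tendsto_nhds_unique hL (Real.hasProd_of_hasSum_log h0 hlog.hasSum).tendsto_prod_nat]
  exact Real.exp_pos _

lemma exists_ne_iff_exists_deriv_ne_zero {g : ℂ → ℂ} (hg : DifferentiableOn ℂ g unitDisk) :
    (∃ z ∈ unitDisk, ∃ w ∈ unitDisk, g z ≠ g w) ↔ ∃ b ∈ unitDisk, deriv g b ≠ 0 := by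
  constructor
  · rintro ⟨z, hz, w, hw, hne⟩
    by_contra! h
    exact hne (isOpen_unitDisk.is_const_of_deriv_eq_zero isPreconnected_unitDisk hg h hz hw)
  · rintro ⟨b, hb, hder⟩
    by_contra! h
    have hconst : g =ᶠ[𝓝 b] fun _ => g b :=
      eventually_of_mem (isOpen_unitDisk.mem_nhds hb) fun z hz => h z hz b hb
    exact hder (by rw [hconst.deriv_eq, deriv_const])

lemma AnalyticOnNhd.countable_preimage_zero_inter {g : ℂ → ℂ} {U : Set ℂ}
    (hg : AnalyticOnNhd ℂ g U) (hU : IsPreconnected U) (hnz : ∃ z ∈ U, g z ≠ 0) :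
    (g ⁻¹' {0} ∩ U).Countable := by
  refine (HereditarilyLindelofSpace.isLindelof _).countable_of_isDiscrete
    (isDiscrete_of_codiscreteWithin ?_)
  obtain hzero | hev := hg.eqOn_zero_or_eventually_ne_zero_of_preconnected hU
  · obtain ⟨z, hz, hgz⟩ := hnz
    exact absurd (hzero hz) hgz
  · exact hev

lemma exists_forall_deriv_ne_zero {G : ℕ → ℂ → ℂ} (hG : ∀ n, DifferentiableOn ℂ (G n) unitDisk)
    (hnc : ∀ n, ∃ z ∈ unitDisk, ∃ w ∈ unitDisk, G n z ≠ G n w) :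
    ∃ b ∈ unitDisk, ∀ n, deriv (G n) b ≠ 0 := by
  have hcount : (⋃ n, deriv (G n) ⁻¹' {0} ∩ unitDisk).Countable := countable_iUnion fun n =>
    ((hG n).analyticOnNhd isOpen_unitDisk).deriv.countable_preimage_zero_inter
      isPreconnected_unitDisk ((exists_ne_iff_exists_deriv_ne_zero (hG n)).1 (hnc n))
  obtain ⟨b, hbD, hb⟩ := (hcount.dense_compl ℂ).inter_open_nonempty unitDisk isOpen_unitDisk
    ⟨0, zero_mem_unitDisk⟩
  exact ⟨b, hbD, fun n hn => hb (mem_iUnion.2 ⟨n, hn, hbD⟩)⟩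

lemma IsHolSelfMap.differentiableAt {g : ℂ → ℂ} (hg : IsHolSelfMap g) {z : ℂ}
    (hz : z ∈ unitDisk) : DifferentiableAt ℂ g z :=
  hg.1.differentiableAt (isOpen_unitDisk.mem_nhds hz)

lemma IsHolSelfMap.comp {g h : ℂ → ℂ} (hg : IsHolSelfMap g) (hh : IsHolSelfMap h) :
    IsHolSelfMap (g ∘ h) :=
  ⟨hg.1.comp hh.1 hh.2, hg.2.comp hh.2⟩

lemma exists_ne_comp {g h : ℂ → ℂ} (hg : DifferentiableOn ℂ g unitDisk) (hh : IsHolSelfMap h)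
    (hgnc : ∃ z ∈ unitDisk, ∃ w ∈ unitDisk, g z ≠ g w)
    (hhnc : ∃ z ∈ unitDisk, ∃ w ∈ unitDisk, h z ≠ h w) :
    ∃ z ∈ unitDisk, ∃ w ∈ unitDisk, g (h z) ≠ g (h w) := by
  have hopen : IsOpen (h '' unitDisk) := by
    rcases (hh.1.analyticOnNhd isOpen_unitDisk).is_constant_or_isOpen isPreconnected_unitDisk
      with ⟨c, hc⟩ | hopen
    · obtain ⟨z, hz, w, hw, hne⟩ := hhnc
      exact absurd ((hc z hz).trans (hc w hw).symm) hne
    · exact hopen _ subset_rfl isOpen_unitDisk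
  by_contra! hconst
  have h0 := zero_mem_unitDisk
  have heq : EqOn g (fun _ => g (h 0)) unitDisk :=
    (hg.analyticOnNhd isOpen_unitDisk).eqOn_of_preconnected_of_eventuallyEq analyticOnNhd_const
      isPreconnected_unitDisk (hh.2 h0) <| mem_of_superset
        (hopen.mem_nhds (mem_image_of_mem h h0)) fun _ ⟨x, hx, hxy⟩ => hxy ▸ hconst x hx 0 h0
  obtain ⟨z, hz, w, hw, hne⟩ := hgnc
  exact hne ((heq hz).trans (heq hw).symm)

lemma hypDist_comp {g h : ℂ → ℂ} {z : ℂ} (hg : DifferentiableAt ℂ g (h z))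
    (hh : DifferentiableAt ℂ h z) (hhz : h z ∈ unitDisk) :
    hypDist (g ∘ h) z = hypDist g (h z) * hypDist h z := by
  have := (one_sub_sq_norm_pos hhz).ne'
  rw [hypDist, hypDist, hypDist, deriv_comp z hg hh, norm_mul, Function.comp_apply]
  field_simp

lemma tendsto_hypDist_of_tendstoLocallyUniformlyOn {G : ℕ → ℂ → ℂ} {g : ℂ → ℂ}
    (hG : ∀ n, DifferentiableOn ℂ (G n) unitDisk)
    (hconv : TendstoLocallyUniformlyOn G g atTop unitDisk) {a : ℂ} (ha : a ∈ unitDisk)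
    (hga : g a ∈ unitDisk) : Tendsto (fun n => hypDist (G n) a) atTop (𝓝 (hypDist g a)) := by
  have hderiv := (hconv.deriv (Eventually.of_forall hG) isOpen_unitDisk).tendsto_at ha
  exact (tendsto_const_nhds.mul hderiv.norm).div
    (tendsto_const_nhds.sub ((hconv.tendsto_at ha).norm.pow 2)) (one_sub_sq_norm_pos hga).ne'

section Iterates

variable {f F : ℕ → ℂ → ℂ} {Flim : ℂ → ℂ}

lemma isHolSelfMap_iterate (hf : ∀ n, IsHolSelfMap (f (n + 1))) (hF0 : ∀ z, F 0 z = z)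
    (hFrec : ∀ n z, F (n + 1) z = f (n + 1) (F n z)) (n : ℕ) : IsHolSelfMap (F n) := by
  induction n with
  | zero => exact funext hF0 ▸ ⟨differentiableOn_id, mapsTo_id _⟩
  | succ n ih => exact (funext (hFrec n) : F (n + 1) = f (n + 1) ∘ F n) ▸ (hf n).comp ih

lemma exists_ne_iterate (hf : ∀ n, IsHolSelfMap (f (n + 1)))
    (hfnc : ∀ n, ∃ z ∈ unitDisk, ∃ w ∈ unitDisk, f (n + 1) z ≠ f (n + 1) w)
    (hF0 : ∀ z, F 0 z = z) (hFrec : ∀ n z, F (n + 1) z = f (n + 1) (F n z)) (n : ℕ) :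
    ∃ z ∈ unitDisk, ∃ w ∈ unitDisk, F n z ≠ F n w := by
  induction n with
  | zero =>
    refine ⟨0, zero_mem_unitDisk, 1 / 2, mem_unitDisk.2 ?_, ?_⟩ <;> norm_num [hF0]
  | succ n ih =>
    simp only [hFrec]
    exact exists_ne_comp (hf n).1 (isHolSelfMap_iterate hf hF0 hFrec n) (hfnc n) ih

lemma hypDist_iterate (hf : ∀ n, IsHolSelfMap (f (n + 1))) (hF0 : ∀ z, F 0 z = z)
    (hFrec : ∀ n z, F (n + 1) z = f (n + 1) (F n z)) {a : ℂ} (ha : a ∈ unitDisk) (n : ℕ) :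
    hypDist (F n) a = ∏ k ∈ Finset.range n, hypDist (f (k + 1)) (F k a) := by
  have hF := isHolSelfMap_iterate hf hF0 hFrec
  induction n with
  | zero =>
    rw [funext hF0, Finset.prod_range_zero, hypDist, deriv_id'', norm_one, mul_one,
      div_self (one_sub_sq_norm_pos ha).ne']
  | succ n ih =>
    rw [Finset.prod_range_succ, ← ih, (funext (hFrec n) : F (n + 1) = f (n + 1) ∘ F n),
      hypDist_comp ((hf n).differentiableAt ((hF n).2 ha)) ((hF n).differentiableAt ha)
        ((hF n).2 ha), mul_comm]

lemma tendsto_prod_hypDist_orbit (hf : ∀ n, IsHolSelfMap (f (n + 1))) (hF0 : ∀ z, F 0 z = z)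
    (hFrec : ∀ n z, F (n + 1) z = f (n + 1) (F n z)) (hFlim : MapsTo Flim unitDisk unitDisk)
    (hconv : TendstoLocallyUniformlyOn F Flim atTop unitDisk) {b : ℂ} (hb : b ∈ unitDisk) :
    Tendsto (fun n => ∏ k ∈ Finset.range n, hypDist (f (k + 1)) (F k b)) atTop
      (𝓝 (hypDist Flim b)) :=
  (tendsto_hypDist_of_tendstoLocallyUniformlyOn (fun n => (isHolSelfMap_iterate hf hF0 hFrec n).1)
    hconv hb (hFlim hb)).congr (hypDist_iterate hf hF0 hFrec hb)

lemma summable_orbit_iff (hf : ∀ n, IsHolSelfMap (f (n + 1))) (hF0 : ∀ z, F 0 z = z)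
    (hFrec : ∀ n z, F (n + 1) z = f (n + 1) (F n z)) (hFlim : MapsTo Flim unitDisk unitDisk)
    (hconv : TendstoLocallyUniformlyOn F Flim atTop unitDisk) {b : ℂ} (hb : b ∈ unitDisk) :
    Summable (fun n => 1 - hypDist (f (n + 1)) (F n b)) ↔
      Summable (fun n => 1 - hypDist (f (n + 1)) b) := by
  have hFb := fun n => (isHolSelfMap_iterate hf hF0 hFrec n).2 hb
  obtain ⟨r, hr, hr1⟩ := exists_between (pseudoDist_lt_one (hFlim hb) hb)
  have hρ : ∀ᶠ n in atTop, pseudoDist (F n b) b ≤ r :=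
    ((continuousAt_pseudoDist_left (one_sub_conj_mul_ne_zero (hFlim hb) hb)).tendsto.comp
      (hconv.tendsto_at hb)).eventually (eventually_le_nhds hr)
  constructor
  · exact summable_one_sub_hypDist_of_pseudoDist_le hf hFb (fun _ => hb) hr1 hρ
  · refine summable_one_sub_hypDist_of_pseudoDist_le hf (fun _ => hb) hFb hr1 ?_
    simpa only [pseudoDist_comm b] using hρ

lemma summable_of_exists_ne (hf : ∀ n, IsHolSelfMap (f (n + 1))) (hF0 : ∀ z, F 0 z = z)
    (hFrec : ∀ n z, F (n + 1) z = f (n + 1) (F n z)) (hFlim : IsHolSelfMap Flim)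
    (hconv : TendstoLocallyUniformlyOn F Flim atTop unitDisk)
    (hnc : ∃ z ∈ unitDisk, ∃ w ∈ unitDisk, Flim z ≠ Flim w) {a : ℂ} (ha : a ∈ unitDisk) :
    Summable (fun n => 1 - hypDist (f (n + 1)) a) := by
  obtain ⟨b, hb, hder⟩ := (exists_ne_iff_exists_deriv_ne_zero hFlim.1).1 hnc
  have hFb := fun n => (isHolSelfMap_iterate hf hF0 hFrec n).2 hb
  have horbit : Summable (fun n => 1 - hypDist (f (n + 1)) (F n b)) :=
    summable_one_sub_of_tendsto_prod (fun n => hypDist_nonneg (hFb n) ((hf n).2 (hFb n)))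
      (fun n => hypDist_le_one (hf n) (hFb n))
      (tendsto_prod_hypDist_orbit hf hF0 hFrec hFlim.2 hconv hb)
      (hypDist_pos hb (hFlim.2 hb) hder)
  exact summable_one_sub_hypDist_of_summable hf hb ha
    ((summable_orbit_iff hf hF0 hFrec hFlim.2 hconv hb).1 horbit)

lemma exists_ne_of_summable (hf : ∀ n, IsHolSelfMap (f (n + 1)))
    (hfnc : ∀ n, ∃ z ∈ unitDisk, ∃ w ∈ unitDisk, f (n + 1) z ≠ f (n + 1) w)
    (hF0 : ∀ z, F 0 z = z) (hFrec : ∀ n z, F (n + 1) z = f (n + 1) (F n z))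
    (hFlim : IsHolSelfMap Flim) (hconv : TendstoLocallyUniformlyOn F Flim atTop unitDisk)
    {a : ℂ} (ha : a ∈ unitDisk) (hs : Summable (fun n => 1 - hypDist (f (n + 1)) a)) :
    ∃ z ∈ unitDisk, ∃ w ∈ unitDisk, Flim z ≠ Flim w := by
  have hF := isHolSelfMap_iterate hf hF0 hFrec
  obtain ⟨b, hb, hder⟩ := exists_forall_deriv_ne_zero (fun n => (hF n).1)
    (exists_ne_iterate hf hfnc hF0 hFrec)
  have hpos : ∀ n, 0 < hypDist (f (n + 1)) (F n b) := fun n =>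
    hypDist_pos ((hF n).2 hb) ((hf n).2 ((hF n).2 hb)) fun h0 => hder (n + 1) <| by
      rw [(funext (hFrec n) : F (n + 1) = f (n + 1) ∘ F n),
        deriv_comp b ((hf n).differentiableAt ((hF n).2 hb)) ((hF n).differentiableAt hb), h0,
        zero_mul]
  have hlim := pos_of_tendsto_prod_of_summable hpos
    ((summable_orbit_iff hf hF0 hFrec hFlim.2 hconv hb).2
      (summable_one_sub_hypDist_of_summable hf ha hb hs))
    (tendsto_prod_hypDist_orbit hf hF0 hFrec hFlim.2 hconv hb)
  refine (exists_ne_iff_exists_deriv_ne_zero hFlim.1).2 ⟨b, hb, fun h0 => ?_⟩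
  simp [hypDist, h0] at hlim

end Iterates

/-- If `(f n)` (indexed from 1) are nonconstant holomorphic self-maps of
the unit disk whose forward iterates `F n = f n ∘ ⋯ ∘ f 1` converge locally uniformly on the
disk to a holomorphic self-map `Flim`, then `Flim` is nonconstant iff the series
`∑ (1 - D_h (f n) a)` converges for every `a` in the disk, iff it converges for some `a`
in the disk. -/
theorem stmt_0
    (f F : ℕ → ℂ → ℂ) (Flim : ℂ → ℂ)
    (hf : ∀ n : ℕ, IsHolSelfMap (f (n + 1)))
    (hfnc : ∀ n : ℕ, ∃ z ∈ unitDisk, ∃ w ∈ unitDisk, f (n + 1) z ≠ f (n + 1) w)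
    (hF0 : ∀ z, F 0 z = z)
    (hFrec : ∀ n z, F (n + 1) z = f (n + 1) (F n z))
    (hFlim : IsHolSelfMap Flim)
    (hconv : TendstoLocallyUniformlyOn F Flim atTop unitDisk) :
    ((∃ z ∈ unitDisk, ∃ w ∈ unitDisk, Flim z ≠ Flim w) ↔
        ∀ a ∈ unitDisk, Summable (fun n : ℕ => 1 - hypDist (f (n + 1)) a)) ∧
    ((∃ z ∈ unitDisk, ∃ w ∈ unitDisk, Flim z ≠ Flim w) ↔
        ∃ a ∈ unitDisk, Summable (fun n : ℕ => 1 - hypDist (f (n + 1)) a)) := by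
  have summable_everywhere := fun hnc a (ha : a ∈ unitDisk) =>
    summable_of_exists_ne hf hF0 hFrec hFlim hconv hnc ha
  have nonconst := fun a (ha : a ∈ unitDisk) hs =>
    exists_ne_of_summable hf hfnc hF0 hFrec hFlim hconv ha hs
  have h0 := zero_mem_unitDisk
  exact ⟨⟨summable_everywhere, fun hs => nonconst 0 h0 (hs 0 h0)⟩,
    ⟨fun hnc => ⟨0, h0, summable_everywhere hnc 0 h0⟩, fun ⟨a, ha, hs⟩ => nonconst a ha hs⟩⟩
end
end

section
/- Let (f_n)_{n≥1} be a sequence of holomorphic self-maps of the unit disk 𝔻 whose forward iterates F_n := f_n ∘ ⋯ ∘ f_1 converge locally uniformly on 𝔻 to a nonconstant holomorphic self-map F of 𝔻, and let c, w ∈ 𝔻. Then the sequence n ↦ ord_w(F_n − F_n(c)) is nondecreasing, each of its terms is at most ord_w(F − F(c)), and there exists N such that ord_w(F_n − F_n(c)) = ord_w(F − F(c)) for all n ≥ N. -/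
open Filter Metric Set

noncomputable section

/-- The order of vanishing of `g` at `w`: the least `k` such that the `k`-th derivative of
`g` at `w` is nonzero (`⊤` if all derivatives vanish). -/
def ordAt (g : ℂ → ℂ) (w : ℂ) : ℕ∞ :=
  sInf {n : ℕ∞ | ∃ k : ℕ, (k : ℕ∞) = n ∧ iteratedDeriv k g w ≠ 0}


/-!
Write `Gₙ = Fₙ - Fₙ(c)` and `G = F - F(c)`. Since `Gₙ₊₁ = Gₙ · (dslope fₙ₊₁ (Fₙ c) ∘ Fₙ)`,
the order at `w` can only grow. The derivatives of `Gₙ` at `w` converge to those of `G`, so a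
lower bound on the orders of the `Gₙ` passes to `G`; hence `ord_w Gₙ ≤ ord_w G`, which is finite
because `F` is nonconstant, and the orders stabilise at some `L`. A zero of `Gₙ` is a zero of
every later `Gₖ`, hence of `G`, so on a small circle around `w` no `Gₙ` vanishes except at `w`.
Then `Gₙ / (z - w)^L` has no zeros on the disc and is bounded below on the circle uniformly in
`n`; by the minimum modulus principle its value `Gₙ^(L)(w) / L!` at the centre stays away from
`0`, so `G^(L)(w) ≠ 0` and `ord_w G ≤ L` (an argument of Hurwitz type).
-/

open Function Topology
open scoped Nat

section OrderOfVanishing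

variable {g : ℂ → ℂ} {w : ℂ}

lemma natCast_le_ordAt_iff {k : ℕ} :
    (k : ℕ∞) ≤ ordAt g w ↔ ∀ j < k, iteratedDeriv j g w = 0 := by
  simp only [ordAt, le_sInf_iff, mem_ofPred_eq, forall_exists_index, and_imp]
  constructor
  · intro h j hj
    by_contra hne
    exact absurd (h _ j rfl hne) (by exact_mod_cast hj.not_ge)
  · rintro h _ j rfl hj
    by_contra hlt
    exact hj (h j (by exact_mod_cast not_le.mp hlt))

lemma ordAt_le_of_iteratedDeriv_ne_zero {k : ℕ} (hk : iteratedDeriv k g w ≠ 0) :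
    ordAt g w ≤ k :=
  sInf_le ⟨k, rfl, hk⟩

lemma iteratedDeriv_ne_zero_of_ordAt_eq {k : ℕ} (hk : ordAt g w = k) :
    iteratedDeriv k g w ≠ 0 := by
  intro h
  have : ((k + 1 : ℕ) : ℕ∞) ≤ ordAt g w := natCast_le_ordAt_iff.mpr fun j hj => by
    rcases Nat.lt_succ_iff_lt_or_eq.mp hj with hj | rfl
    · exact natCast_le_ordAt_iff.mp hk.ge j hj
    · exact h
  rw [hk] at this
  exact absurd this (by exact_mod_cast (k.lt_succ_self).not_ge)

lemma ordAt_eq_analyticOrderAt (hg : AnalyticAt ℂ g w) : ordAt g w = analyticOrderAt g w :=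
  ENat.eq_of_forall_natCast_le_iff fun k => by
    rw [natCast_le_ordAt_iff, natCast_le_analyticOrderAt_iff_iteratedDeriv_eq_zero hg]

end OrderOfVanishing

section IteratedDSlope

variable {g : ℂ → ℂ} {w : ℂ}

lemma iterate_dslope_self (hg : AnalyticAt ℂ g w) (k : ℕ) :
    (swap dslope w)^[k] g w = iteratedDeriv k g w / k ! := by
  rw [← (hg.hasFPowerSeriesAt.has_fpower_series_iterate_dslope_fslope k).coeff_zero 1,
    ← FormalMultilinearSeries.coeff, FormalMultilinearSeries.coeff_iterate_fslope, zero_add,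
    FormalMultilinearSeries.coeff_ofScalars]

lemma DifferentiableOn.iterate_dslope {U : Set ℂ} (hU : U ∈ 𝓝 w) (hg : DifferentiableOn ℂ g U)
    (k : ℕ) : DifferentiableOn ℂ ((swap dslope w)^[k] g) U := by
  induction k with
  | zero => exact hg
  | succ k ih =>
    rw [iterate_succ_apply']
    exact (Complex.differentiableOn_dslope hU).mpr ih

lemma pow_sub_mul_iterate_dslope_of_natCast_le_ordAt (hg : AnalyticAt ℂ g w) {k : ℕ}
    (hk : (k : ℕ∞) ≤ ordAt g w) (z : ℂ) : (z - w) ^ k * (swap dslope w)^[k] g z = g z :=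
  pow_sub_smul_iterate_dslope_of_zero k (fun j hj => by
    rw [iterate_dslope_self hg, natCast_le_ordAt_iff.mp hk j hj, zero_div]) z

end IteratedDSlope

lemma le_norm_of_forall_mem_sphere_le_norm {h : ℂ → ℂ} {w : ℂ} {r a : ℝ} (hr : 0 < r)
    (hd : DifferentiableOn ℂ h (closedBall w r)) (hne : ∀ z ∈ closedBall w r, h z ≠ 0)
    (ha : ∀ z ∈ sphere w r, a ≤ ‖h z‖) : a ≤ ‖h w‖ := by
  rcases le_or_gt a 0 with ha0 | ha0
  · exact ha0.trans (norm_nonneg _)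
  have hinv : DiffContOnCl ℂ (fun z => (h z)⁻¹) (ball w r) :=
    (hd.inv hne).diffContOnCl_ball subset_rfl
  have hmax := Complex.norm_le_of_forall_mem_frontier_norm_le isBounded_ball hinv (C := a⁻¹)
    (by
      rw [frontier_ball w hr.ne']
      intro z hz
      rw [norm_inv]
      exact inv_anti₀ ha0 (ha z hz))
    (by rw [closure_ball w hr.ne']; exact mem_closedBall_self hr.le)
  rw [norm_inv] at hmax
  exact (inv_le_inv₀ (norm_pos_iff.mpr (hne w (mem_closedBall_self hr.le))) ha0).mp hmax

lemma factorial_mul_div_pow_le_norm_iteratedDeriv {h : ℂ → ℂ} {U : Set ℂ} {w : ℂ} {r δ : ℝ}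
    {L : ℕ} (hU : IsOpen U) (hh : DifferentiableOn ℂ h U) (hr : 0 < r)
    (hball : closedBall w r ⊆ U) (hord : ordAt h w = L)
    (hzeros : ∀ z ∈ closedBall w r, z ≠ w → h z ≠ 0)
    (hδ : ∀ z ∈ sphere w r, δ ≤ ‖h z‖) :
    L ! * (δ / r ^ L) ≤ ‖iteratedDeriv L h w‖ := by
  set H := (swap dslope w)^[L] h
  have hw : w ∈ U := hball (mem_closedBall_self hr.le)
  have ha : AnalyticAt ℂ h w := hh.analyticAt (hU.mem_nhds hw)
  have hfac : ∀ z, (z - w) ^ L * H z = h z :=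
    pow_sub_mul_iterate_dslope_of_natCast_le_ordAt ha hord.ge
  have hHw : H w = iteratedDeriv L h w / L ! := iterate_dslope_self ha L
  have hHne : ∀ z ∈ closedBall w r, H z ≠ 0 := by
    intro z hz
    rcases eq_or_ne z w with rfl | hzw
    · rw [hHw]
      exact div_ne_zero (iteratedDeriv_ne_zero_of_ordAt_eq hord) (mod_cast L.factorial_ne_zero)
    · exact right_ne_zero_of_mul (by rw [hfac]; exact hzeros z hz hzw)
  have hHsphere : ∀ z ∈ sphere w r, δ / r ^ L ≤ ‖H z‖ := by
    intro z hz
    have hzr : ‖z - w‖ = r := by rw [← dist_eq_norm]; exact mem_sphere.mp hz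
    rw [div_le_iff₀ (by positivity), ← hzr, ← norm_pow, mul_comm, ← norm_mul, hfac]
    exact hδ z hz
  have hmin : δ / r ^ L ≤ ‖H w‖ := le_norm_of_forall_mem_sphere_le_norm hr
    ((hh.iterate_dslope (hU.mem_nhds hw) L).mono hball) hHne hHsphere
  rw [hHw, norm_div, Complex.norm_natCast, le_div_iff₀ (by positivity)] at hmin
  linarith

lemma TendstoLocallyUniformlyOn.sub_eval {ι : Type*} {l : Filter ι} {U : Set ℂ}
    {g : ι → ℂ → ℂ} {g₀ : ℂ → ℂ} (hconv : TendstoLocallyUniformlyOn g g₀ l U) {c : ℂ}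
    (hc : c ∈ U) :
    TendstoLocallyUniformlyOn (fun n z => g n z - g n c) (fun z => g₀ z - g₀ c) l U :=
  hconv.fun_sub ((hconv.tendsto_at hc).tendstoUniformlyOn_const _).tendstoLocallyUniformlyOn

section LocallyUniformLimits

variable {ι E : Type*} [NormedAddCommGroup E] [NormedSpace ℂ E] [CompleteSpace E]
  {l : Filter ι} {U : Set ℂ}

theorem TendstoLocallyUniformlyOn.iteratedDeriv {g : ι → ℂ → E} {g₀ : ℂ → E}
    (hconv : TendstoLocallyUniformlyOn g g₀ l U) (hg : ∀ᶠ n in l, DifferentiableOn ℂ (g n) U)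
    (hU : IsOpen U) (k : ℕ) :
    TendstoLocallyUniformlyOn (fun n => iteratedDeriv k (g n)) (iteratedDeriv k g₀) l U := by
  induction k generalizing g g₀ with
  | zero => simpa using hconv
  | succ k ih =>
    simp only [iteratedDeriv_succ']
    exact ih (hconv.deriv hg hU)
      (hg.mono fun n hn => (hn.analyticOnNhd hU).deriv.differentiableOn)

variable [l.NeBot] {g : ι → ℂ → ℂ} {g₀ : ℂ → ℂ} {w : ℂ}

theorem le_ordAt_of_tendstoLocallyUniformlyOn (hU : IsOpen U)
    (hconv : TendstoLocallyUniformlyOn g g₀ l U) (hg : ∀ᶠ n in l, DifferentiableOn ℂ (g n) U)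
    (hw : w ∈ U) {k : ℕ∞} (hk : ∀ᶠ n in l, k ≤ ordAt (g n) w) : k ≤ ordAt g₀ w := by
  refine ENat.forall_natCast_le_iff_le.mp fun a ha => natCast_le_ordAt_iff.mpr fun j hj => ?_
  refine tendsto_nhds_unique ((hconv.iteratedDeriv hg hU j).tendsto_at hw)
    (tendsto_const_nhds.congr' ?_)
  filter_upwards [hk] with n hn
  exact (natCast_le_ordAt_iff.mp (ha.trans hn) j hj).symm

theorem ordAt_le_of_tendstoLocallyUniformlyOn_of_ordAt_eq {r : ℝ} {L : ℕ}
    (hU : IsOpen U) (hconv : TendstoLocallyUniformlyOn g g₀ l U)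
    (hg : ∀ᶠ n in l, DifferentiableOn ℂ (g n) U) (hr : 0 < r) (hball : closedBall w r ⊆ U)
    (hsphere : ∀ z ∈ sphere w r, g₀ z ≠ 0)
    (hzeros : ∀ᶠ n in l, ∀ z ∈ closedBall w r, z ≠ w → g n z ≠ 0)
    (hord : ∀ᶠ n in l, ordAt (g n) w = L) : ordAt g₀ w ≤ L := by
  have hsphere_sub : sphere w r ⊆ U := sphere_subset_closedBall.trans hball
  obtain ⟨δ, hδ, hδle⟩ : ∃ δ > 0, ∀ z ∈ sphere w r, δ ≤ ‖g₀ z‖ := by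
    obtain ⟨z₀, hz₀, hmin⟩ := (isCompact_sphere w r).exists_isMinOn
      (NormedSpace.sphere_nonempty.mpr hr.le)
      ((hconv.differentiableOn hg hU).continuousOn.mono hsphere_sub).norm
    exact ⟨‖g₀ z₀‖, norm_pos_iff.mpr (hsphere z₀ hz₀), hmin⟩
  have hclose : ∀ᶠ n in l, ∀ z ∈ sphere w r, δ / 2 ≤ ‖g n z‖ := by
    have hunif := (tendstoLocallyUniformlyOn_iff_tendstoUniformlyOn_of_compact
      (isCompact_sphere w r)).mp (hconv.mono hsphere_sub)
    filter_upwards [Metric.tendstoUniformlyOn_iff.mp hunif (δ / 2) (half_pos hδ)] with n hn z hz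
    have hdist : ‖g₀ z - g n z‖ < δ / 2 := by rw [← dist_eq_norm]; exact hn z hz
    linarith [hδle z hz, norm_sub_norm_le (g₀ z) (g n z)]
  have hbound : ∀ᶠ n in l, L ! * (δ / 2 / r ^ L) ≤ ‖iteratedDeriv L (g n) w‖ := by
    filter_upwards [hg, hzeros, hord, hclose] with n hgn hzn hon hcn
    exact factorial_mul_div_pow_le_norm_iteratedDeriv hU hgn hr hball hon hzn hcn
  have hlim := ((hconv.iteratedDeriv hg hU L).tendsto_at
    (hball (mem_closedBall_self hr.le))).norm
  refine ordAt_le_of_iteratedDeriv_ne_zero (norm_pos_iff.mp ?_)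
  exact lt_of_lt_of_le (by positivity) (ge_of_tendsto hlim hbound)

end LocallyUniformLimits

lemma AnalyticAt.exists_closedBall_forall_ne_zero {g : ℂ → ℂ} {U : Set ℂ} {w : ℂ}
    (hg : AnalyticAt ℂ g w) (hfin : analyticOrderAt g w ≠ ⊤) (hU : U ∈ 𝓝 w) :
    ∃ r > 0, closedBall w r ⊆ U ∧ ∀ z ∈ closedBall w r, z ≠ w → g z ≠ 0 := by
  have hne : ∀ᶠ z in 𝓝[≠] w, g z ≠ 0 :=
    hg.eventually_eq_zero_or_eventually_ne_zero.resolve_left (analyticOrderAt_eq_top.not.mp hfin)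
  obtain ⟨ε, hε, hball⟩ := Metric.eventually_nhds_iff_ball.mp
    (eventually_nhdsWithin_iff.mp hne |>.and hU)
  refine ⟨ε / 2, half_pos hε, fun z hz => (hball z ?_).2, fun z hz hzw => (hball z ?_).1 hzw⟩ <;>
    exact closedBall_subset_ball (half_lt_self hε) hz

lemma analyticOrderAt_sub_ne_top_of_ne {f : ℂ → ℂ} {U : Set ℂ} (hU : IsOpen U)
    (hUc : IsPreconnected U) (hf : DifferentiableOn ℂ f U) {z z' : ℂ} (hz : z ∈ U)
    (hz' : z' ∈ U) (hne : f z ≠ f z') (c : ℂ) {w : ℂ} (hw : w ∈ U) :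
    analyticOrderAt (fun x => f x - f c) w ≠ ⊤ := by
  have hanal : AnalyticOnNhd ℂ (fun x => f x - f c) U := (hf.sub_const _).analyticOnNhd hU
  obtain ⟨y, hy, hyc⟩ : ∃ y ∈ U, f y ≠ f c := by
    by_cases h : f z = f c
    · exact ⟨z', hz', h ▸ hne.symm⟩
    · exact ⟨z, hz, h⟩
  have hy0 : analyticOrderAt (fun x => f x - f c) y = 0 :=
    analyticOrderAt_eq_zero.mpr (.inr (sub_ne_zero.mpr hyc))
  exact hanal.analyticOrderAt_ne_top_of_isPreconnected hUc hy hw (hy0 ▸ ENat.zero_ne_top)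

lemma ordAt_sub_le_ordAt_comp_sub {f u : ℂ → ℂ} {U : Set ℂ} {c w : ℂ} (hU : IsOpen U)
    (hf : DifferentiableOn ℂ f U) (hu : AnalyticAt ℂ u w) (hc : u c ∈ U) (hw : u w ∈ U) :
    ordAt (fun z => u z - u c) w ≤ ordAt (fun z => f (u z) - f (u c)) w := by
  have hv : AnalyticAt ℂ (fun z => dslope f (u c) (u z)) w :=
    (((Complex.differentiableOn_dslope (hU.mem_nhds hc)).mpr hf).analyticAt
      (hU.mem_nhds hw)).comp hu
  have hsub : AnalyticAt ℂ (fun z => u z - u c) w := hu.sub analyticAt_const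
  have hfac : (fun z => f (u z) - f (u c))
      = (fun z => u z - u c) * fun z => dslope f (u c) (u z) := by
    funext z
    rw [Pi.mul_apply, ← smul_eq_mul, sub_smul_dslope]
  rw [hfac, ordAt_eq_analyticOrderAt hsub, ordAt_eq_analyticOrderAt (hsub.mul hv),
    analyticOrderAt_mul hsub hv]
  exact le_self_add

lemma ENat.exists_eventually_eq_of_monotone {a : ℕ → ℕ∞} (ha : Monotone a) {m : ℕ∞}
    (hm : m ≠ ⊤) (hbdd : ∀ n, a n ≤ m) : ∃ L : ℕ, ∀ᶠ n in atTop, a n = L := by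
  obtain ⟨L, hL⟩ := ENat.ne_top_iff_exists.mp (ne_top_of_le_ne_top hm (iSup_le hbdd))
  refine ⟨L, ?_⟩
  have hlim := tendsto_atTop_iSup ha
  rwa [← hL, ENat.nhds_natCast, tendsto_pure] at hlim

section ForwardIterates

variable {f F : ℕ → ℂ → ℂ} (hFrec : ∀ n z, F (n + 1) z = f (n + 1) (F n z))
include hFrec

lemma isHolSelfMap_forwardIterate (hf : ∀ n : ℕ, IsHolSelfMap (f (n + 1)))
    (hF0 : ∀ z, F 0 z = z) (n : ℕ) : IsHolSelfMap (F n) := by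
  induction n with
  | zero =>
    rw [funext hF0]
    exact ⟨differentiableOn_id, mapsTo_id _⟩
  | succ n ih =>
    rw [funext (hFrec n)]
    exact ⟨(hf n).1.comp ih.1 ih.2, (hf n).2.comp ih.2⟩

lemma forwardIterate_eq_of_le {c z : ℂ} {n k : ℕ} (hnk : n ≤ k) (h : F n z = F n c) :
    F k z = F k c := by
  induction k, hnk using Nat.le_induction with
  | base => exact h
  | succ k _ ih => rw [hFrec, hFrec, ih]

lemma forwardIterate_ne_of_tendsto {Flim : ℂ → ℂ} {c z : ℂ}
    (hz : Tendsto (F · z) atTop (𝓝 (Flim z))) (hc : Tendsto (F · c) atTop (𝓝 (Flim c)))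
    (hne : Flim z ≠ Flim c) (n : ℕ) : F n z ≠ F n c := fun h =>
  hne <| tendsto_nhds_unique (hz.congr' (eventually_atTop.mpr
    ⟨n, fun _ hk => forwardIterate_eq_of_le hFrec hk h⟩)) hc

lemma monotone_ordAt_forwardIterate_sub (hf : ∀ n : ℕ, IsHolSelfMap (f (n + 1)))
    (hF0 : ∀ z, F 0 z = z) {c w : ℂ} (hc : c ∈ unitDisk) (hw : w ∈ unitDisk) :
    Monotone fun n => ordAt (fun z => F n z - F n c) w := by
  have hFhol := isHolSelfMap_forwardIterate hFrec hf hF0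
  refine monotone_nat_of_le_succ fun n => ?_
  simp only [hFrec n]
  exact ordAt_sub_le_ordAt_comp_sub isOpen_ball (hf n).1
    ((hFhol n).1.analyticAt (isOpen_ball.mem_nhds hw)) ((hFhol n).2 hc) ((hFhol n).2 hw)

end ForwardIterates

/-- If the forward iterates `F n` of holomorphic self-maps `(f n)` of the
unit disk converge locally uniformly to a nonconstant holomorphic self-map `Flim`, then for
`c, w` in the disk the sequence `n ↦ ord_w (F n - F n c)` is nondecreasing, bounded above by
`ord_w (Flim - Flim c)`, and eventually equal to it. -/
theorem stmt_7
    (f F : ℕ → ℂ → ℂ) (Flim : ℂ → ℂ) (c w : ℂ)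
    (hf : ∀ n : ℕ, IsHolSelfMap (f (n + 1)))
    (hF0 : ∀ z, F 0 z = z)
    (hFrec : ∀ n z, F (n + 1) z = f (n + 1) (F n z))
    (hFlim : IsHolSelfMap Flim)
    (hconv : TendstoLocallyUniformlyOn F Flim atTop unitDisk)
    (hnc : ∃ z ∈ unitDisk, ∃ w' ∈ unitDisk, Flim z ≠ Flim w')
    (hc : c ∈ unitDisk) (hw : w ∈ unitDisk) :
    Monotone (fun n : ℕ => ordAt (fun z => F (n + 1) z - F (n + 1) c) w) ∧
    (∀ n : ℕ, ordAt (fun z => F (n + 1) z - F (n + 1) c) w ≤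
        ordAt (fun z => Flim z - Flim c) w) ∧
    (∃ N : ℕ, ∀ n ≥ N, ordAt (fun z => F (n + 1) z - F (n + 1) c) w =
        ordAt (fun z => Flim z - Flim c) w) := by
  have hD : IsOpen unitDisk := isOpen_ball
  have hG : ∀ n, DifferentiableOn ℂ (fun z => F n z - F n c) unitDisk :=
    fun n => (isHolSelfMap_forwardIterate hFrec hf hF0 n).1.sub_const _
  have hG₀ : AnalyticAt ℂ (fun z => Flim z - Flim c) w :=
    (hFlim.1.sub_const _).analyticAt (hD.mem_nhds hw)
  have hmono := monotone_ordAt_forwardIterate_sub hFrec hf hF0 hc hw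
  have hbound : ∀ n, ordAt (fun z => F n z - F n c) w ≤ ordAt (fun z => Flim z - Flim c) w :=
    fun n => le_ordAt_of_tendstoLocallyUniformlyOn hD (hconv.sub_eval hc) (.of_forall hG) hw
      (eventually_atTop.mpr ⟨n, fun k hk => hmono hk⟩)
  obtain ⟨z, hz, z', hz', hne⟩ := hnc
  have hfin := analyticOrderAt_sub_ne_top_of_ne hD (convex_ball _ _).isPreconnected hFlim.1
    hz hz' hne c hw
  obtain ⟨L, hL⟩ := ENat.exists_eventually_eq_of_monotone hmono
    (ordAt_eq_analyticOrderAt hG₀ ▸ hfin) hbound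
  obtain ⟨r, hr, hball, hzeros⟩ := hG₀.exists_closedBall_forall_ne_zero hfin (hD.mem_nhds hw)
  have hlimit : ordAt (fun z => Flim z - Flim c) w = L := by
    obtain ⟨n, hn⟩ := hL.exists
    refine le_antisymm ?_ (hn ▸ hbound n)
    refine ordAt_le_of_tendstoLocallyUniformlyOn_of_ordAt_eq hD (hconv.sub_eval hc)
      (.of_forall hG) hr hball (fun x hx => hzeros x (sphere_subset_closedBall hx)
        (ne_of_mem_sphere hx hr.ne')) (.of_forall fun n x hx hxw => ?_) hL
    exact sub_ne_zero.mpr (forwardIterate_ne_of_tendsto hFrec (hconv.tendsto_at (hball hx))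
      (hconv.tendsto_at hc) (sub_ne_zero.mp (hzeros x hx hxw)) n)
  obtain ⟨N, hN⟩ := eventually_atTop.mp hL
  exact ⟨fun a b hab => hmono (by omega), fun n => hbound (n + 1),
    ⟨N, fun n hn => (hN (n + 1) (by omega)).trans hlimit.symm⟩⟩
end
end

section
/- Let 0 < ε < 1/9 and let H be a holomorphic self-map of the unit disk 𝔻 with H(0) = 0 and |H′(0)| > 1 − ε. Then the image H(𝔻) contains the disk {w ∈ ℂ : |w| < 1 − 3√ε}. -/
open Filter Metric Set

noncomputable section

/-!
Suppose `w ∉ H(𝔻)` with `|w| < 1`. Composing `H` with the disk automorphism `φ_w` exchanging `w`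
and `0` gives a self-map `g` of `𝔻` without zeros, so `g = h²` for a holomorphic self-map `h` with
`h(0)² = w`. Comparing `g'(0) = 2 h(0) h'(0)` with `g'(0) = -(1 - |w|²) H'(0)` and applying the
Schwarz–Pick bound `|h'(0)| ≤ 1 - |h(0)|²` yields `|H'(0)| ≤ 2√|w| / (1 + |w|)`. When
`|H'(0)| > 1 - ε`, this inequality forces `|w| ≥ 1 - 3√ε`.
-/

open ComplexConjugate

namespace Complex

theorem exists_differentiableOn_exp_eq {f : ℂ → ℂ} {c : ℂ} {r : ℝ}
    (hf : DifferentiableOn ℂ f (ball c r)) (hf₀ : ∀ z ∈ ball c r, f z ≠ 0) :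
    ∃ L : ℂ → ℂ, DifferentiableOn ℂ L (ball c r) ∧ ∀ z ∈ ball c r, exp (L z) = f z := by
  obtain hr | hr := le_or_gt r 0
  · exact ⟨0, by simp [ball_eq_empty.2 hr]⟩
  have hc : c ∈ ball c r := mem_ball_self hr
  have hf' : DifferentiableOn ℂ (deriv f) (ball c r) :=
    (hf.analyticOnNhd isOpen_ball).deriv.differentiableOn
  obtain ⟨L, hLc, hL⟩ := (hf'.div hf hf₀).isExactOn_ball.with_val_at c (log (f c))
  have hderiv : ∀ z ∈ ball c r, HasDerivAt (fun z ↦ f z * exp (-L z)) 0 z := by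
    intro z hz
    have hfz := (hf.differentiableAt (isOpen_ball.mem_nhds hz)).hasDerivAt
    refine (hfz.mul (hL z hz).neg.cexp).congr_deriv ?_
    simp only [Pi.div_apply]
    field_simp [hf₀ z hz]
    ring
  have hconst : ∀ z ∈ ball c r, f z * exp (-L z) = f c * exp (-L c) := fun z hz ↦
    isOpen_ball.is_const_of_deriv_eq_zero (convex_ball c r).isPreconnected
      (fun z hz ↦ (hderiv z hz).differentiableAt.differentiableWithinAt)
      (fun z hz ↦ (hderiv z hz).deriv) hz hc
  refine ⟨L, fun z hz ↦ (hL z hz).differentiableAt.differentiableWithinAt, fun z hz ↦ ?_⟩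
  have := hconst z hz
  rw [hLc, exp_neg, exp_neg, exp_log (hf₀ c hc), mul_inv_cancel₀ (hf₀ c hc)] at this
  exact ((mul_inv_eq_one₀ (exp_ne_zero _)).1 this).symm

theorem exists_differentiableOn_sq_eq {f : ℂ → ℂ} {c : ℂ} {r : ℝ}
    (hf : DifferentiableOn ℂ f (ball c r)) (hf₀ : ∀ z ∈ ball c r, f z ≠ 0) :
    ∃ g : ℂ → ℂ, DifferentiableOn ℂ g (ball c r) ∧ ∀ z ∈ ball c r, g z ^ 2 = f z := by
  obtain ⟨L, hLd, hL⟩ := exists_differentiableOn_exp_eq hf hf₀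
  refine ⟨fun z ↦ exp (L z / 2), (hLd.div_const 2).cexp, fun z hz ↦ ?_⟩
  rw [sq, ← exp_add, add_halves, hL z hz]

def mobius (a z : ℂ) : ℂ := (a - z) / (1 - conj a * z)

theorem mobius_self (a : ℂ) : mobius a a = 0 := by simp [mobius]

theorem mobius_zero_right (a : ℂ) : mobius a 0 = a := by simp [mobius]

theorem one_sub_conj_mul_ne_zero {a z : ℂ} (ha : ‖a‖ < 1) (hz : ‖z‖ < 1) :
    1 - conj a * z ≠ 0 := by
  refine sub_ne_zero.2 fun h ↦ ?_
  have : ‖conj a * z‖ < 1 := by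
    rw [norm_mul, RCLike.norm_conj]
    nlinarith [norm_nonneg a, norm_nonneg z]
  simp [← h] at this

theorem normSq_one_sub_conj_mul_sub_normSq_sub (a z : ℂ) :
    normSq (1 - conj a * z) - normSq (a - z) = (1 - normSq a) * (1 - normSq z) := by
  simp only [normSq_apply, sub_re, sub_im, mul_re, mul_im, one_re, one_im, conj_re, conj_im]
  ring

theorem norm_mobius_lt_one {a z : ℂ} (ha : ‖a‖ < 1) (hz : ‖z‖ < 1) : ‖mobius a z‖ < 1 := by
  rw [mobius, norm_div, div_lt_one (norm_pos_iff.2 (one_sub_conj_mul_ne_zero ha hz)),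
    ← sq_lt_sq₀ (norm_nonneg _) (norm_nonneg _), Complex.sq_norm, Complex.sq_norm, ← sub_pos,
    normSq_one_sub_conj_mul_sub_normSq_sub, ← Complex.sq_norm, ← Complex.sq_norm]
  exact mul_pos (sub_pos.2 (pow_lt_one₀ (norm_nonneg a) ha two_ne_zero))
    (sub_pos.2 (pow_lt_one₀ (norm_nonneg z) hz two_ne_zero))

theorem mapsTo_mobius {a : ℂ} (ha : ‖a‖ < 1) : MapsTo (mobius a) (ball 0 1) (ball 0 1) :=
  fun _ hz ↦ mem_ball_zero_iff.2 (norm_mobius_lt_one ha (mem_ball_zero_iff.1 hz))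

theorem hasDerivAt_mobius (a : ℂ) {z : ℂ} (hz : 1 - conj a * z ≠ 0) :
    HasDerivAt (mobius a) ((normSq a - 1) / (1 - conj a * z) ^ 2) z := by
  refine ((hasDerivAt_id' z).const_sub a |>.div
    ((hasDerivAt_id' z).const_mul (conj a) |>.const_sub 1) hz).congr_deriv ?_
  rw [normSq_eq_conj_mul_self]
  ring

theorem differentiableOn_mobius {a : ℂ} (ha : ‖a‖ < 1) :
    DifferentiableOn ℂ (mobius a) (ball 0 1) := fun _ hz ↦
  (hasDerivAt_mobius a (one_sub_conj_mul_ne_zero ha (mem_ball_zero_iff.1 hz))).differentiableAt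
    |>.differentiableWithinAt

theorem norm_deriv_zero_le_one_sub_sq {k : ℂ → ℂ} (hk : DifferentiableOn ℂ k (ball 0 1))
    (hmaps : MapsTo k (ball 0 1) (ball 0 1)) : ‖deriv k 0‖ ≤ 1 - ‖k 0‖ ^ 2 := by
  have h₀ : (0 : ℂ) ∈ ball (0 : ℂ) 1 := mem_ball_self one_pos
  set a := k 0
  have ha : ‖a‖ < 1 := mem_ball_zero_iff.1 (hmaps h₀)
  have hpos : 0 < 1 - ‖a‖ ^ 2 := sub_pos.2 (pow_lt_one₀ (norm_nonneg a) ha two_ne_zero)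
  have hschwarz := norm_deriv_le_one_of_mapsTo_ball ((differentiableOn_mobius ha).comp hk hmaps)
    (((mapsTo_mobius ha).comp hmaps).mono_right (by simp [a, mobius_self, ball_subset_closedBall]))
    one_pos
  have hderiv : HasDerivAt (mobius a ∘ k) (-(deriv k 0 / (1 - ‖a‖ ^ 2 : ℝ))) 0 := by
    refine ((hasDerivAt_mobius a (one_sub_conj_mul_ne_zero ha ha)).comp 0
      (hk.differentiableAt (isOpen_ball.mem_nhds h₀)).hasDerivAt).congr_deriv ?_
    have : ((1 - ‖a‖ ^ 2 : ℝ) : ℂ) ≠ 0 := ofReal_ne_zero.2 hpos.ne'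
    rw [← normSq_eq_conj_mul_self, ← Complex.sq_norm]
    push_cast at this ⊢
    field_simp
    ring
  rwa [hderiv.deriv, norm_neg, norm_div, norm_real, Real.norm_of_nonneg hpos.le,
    div_le_one hpos] at hschwarz

theorem norm_deriv_zero_mul_le_of_forall_ne {H : ℂ → ℂ} {w : ℂ}
    (hH : DifferentiableOn ℂ H (ball 0 1)) (hmaps : MapsTo H (ball 0 1) (ball 0 1))
    (hH₀ : H 0 = 0) (hw : ‖w‖ < 1) (hne : ∀ z ∈ ball (0 : ℂ) 1, H z ≠ w) :
    ‖deriv H 0‖ * (1 + ‖w‖) ≤ 2 * √‖w‖ := by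
  have h₀ : (0 : ℂ) ∈ ball (0 : ℂ) 1 := mem_ball_self one_pos
  set g := mobius w ∘ H
  have hg₀ : ∀ z ∈ ball (0 : ℂ) 1, g z ≠ 0 := fun z hz ↦
    div_ne_zero (sub_ne_zero.2 (hne z hz).symm)
      (one_sub_conj_mul_ne_zero hw (mem_ball_zero_iff.1 (hmaps hz)))
  obtain ⟨h, hh, hsq⟩ :=
    exists_differentiableOn_sq_eq ((differentiableOn_mobius hw).comp hH hmaps) hg₀
  have hhmaps : MapsTo h (ball 0 1) (ball 0 1) := by
    intro z hz
    rw [mem_ball_zero_iff, ← pow_lt_one_iff_of_nonneg (norm_nonneg _) two_ne_zero, ← norm_pow,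
      hsq z hz]
    exact mem_ball_zero_iff.1 ((mapsTo_mobius hw).comp hmaps hz)
  have hpick := norm_deriv_zero_le_one_sub_sq hh hhmaps
  have hg'_sq : HasDerivAt g (2 * h 0 * deriv h 0) 0 := by
    refine (((hh.differentiableAt (isOpen_ball.mem_nhds h₀)).hasDerivAt.pow 2).congr_deriv
      (by ring)).congr_of_eventuallyEq ?_
    filter_upwards [isOpen_ball.mem_nhds h₀] with z hz using (hsq z hz).symm
  have hg'_mobius : HasDerivAt g ((normSq w - 1) * deriv H 0) 0 := by
    refine ((hasDerivAt_mobius w (by simp [hH₀])).comp 0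
      (hH.differentiableAt (isOpen_ball.mem_nhds h₀)).hasDerivAt).congr_deriv ?_
    simp [hH₀]
  have hnorm : 2 * ‖h 0‖ * ‖deriv h 0‖ = (1 - ‖w‖ ^ 2) * ‖deriv H 0‖ := by
    have hw2 : ‖w‖ ^ 2 < 1 := pow_lt_one₀ (norm_nonneg w) hw two_ne_zero
    have := congrArg norm (hg'_sq.unique hg'_mobius)
    rwa [← ofReal_one, ← ofReal_sub, norm_mul, norm_mul, norm_mul, Complex.norm_two, norm_real,
      ← Complex.sq_norm, Real.norm_of_nonpos (by linarith), neg_sub] at this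
  have hsqrt : ‖h 0‖ = √‖w‖ := by
    rw [← Real.sqrt_sq (norm_nonneg (h 0)), ← norm_pow, hsq 0 h₀]
    simp [hH₀, mobius_zero_right]
  have ht : ‖h 0‖ ^ 2 = ‖w‖ := by rw [hsqrt, Real.sq_sqrt (norm_nonneg w)]
  rw [← hsqrt, ← ht]
  rw [← ht] at hnorm hw
  refine le_of_mul_le_mul_left ?_ (sub_pos.2 hw)
  nlinarith [mul_le_mul_of_nonneg_left hpick (by positivity : (0 : ℝ) ≤ 2 * ‖h 0‖)]

end Complex

theorem one_sub_three_mul_sqrt_le {ε x : ℝ} (hx : 0 ≤ x) (h : (1 - ε) * (1 + x) < 2 * √x) :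
    1 - 3 * √ε ≤ x := by
  by_contra! hlt
  obtain ⟨t, ht, rfl⟩ : ∃ t, 0 ≤ t ∧ t ^ 2 = x := ⟨√x, Real.sqrt_nonneg x, Real.sq_sqrt hx⟩
  rw [Real.sqrt_sq ht] at h
  set s := √ε
  have hs : 0 ≤ s := Real.sqrt_nonneg ε
  have hεs : ε ≤ s ^ 2 := Real.sq_sqrt' ▸ le_max_left ε 0
  -- `h` says `(1 - t)² < ε (1 + t²) ≤ 2 s²`, while `t < 1 - 3s/2` gives `(1 - t)² > 9s²/4`.
  have ht_lt : t < 1 - 3 / 2 * s := by nlinarith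
  nlinarith

theorem stmt_12_general
    (ε : ℝ)
    (H : ℂ → ℂ) (hH : IsHolSelfMap H) (hfix : H 0 = 0)
    (hd : 1 - ε < ‖deriv H 0‖) :
    Metric.ball (0 : ℂ) (1 - 3 * Real.sqrt ε) ⊆ H '' unitDisk := by
  intro w hw
  rw [mem_ball_zero_iff] at hw
  by_contra hw_notMem
  have hw₁ : ‖w‖ < 1 := hw.trans_le (by linarith [Real.sqrt_nonneg ε])
  have hbound := Complex.norm_deriv_zero_mul_le_of_forall_ne hH.1 hH.2 hfix hw₁
    fun z hz hzw ↦ hw_notMem ⟨z, hz, hzw⟩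
  have hlower : (1 - ε) * (1 + ‖w‖) < 2 * √‖w‖ :=
    (mul_lt_mul_of_pos_right hd (by positivity)).trans_le hbound
  linarith [one_sub_three_mul_sqrt_le (norm_nonneg w) hlower]

/-- If `0 < ε < 1/9` and `H` is a holomorphic self-map of the unit disk
with `H 0 = 0` and `|H′(0)| > 1 - ε`, then the image `H(𝔻)` contains the disk of radius
`1 - 3√ε` about the origin. -/
theorem stmt_12
    (ε : ℝ) (hε0 : 0 < ε) (hε : ε < 1 / 9)
    (H : ℂ → ℂ) (hH : IsHolSelfMap H) (hfix : H 0 = 0)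
    (hd : 1 - ε < ‖deriv H 0‖) :
    Metric.ball (0 : ℂ) (1 - 3 * Real.sqrt ε) ⊆ H '' unitDisk :=
  stmt_12_general ε H hH hfix hd
end
end
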